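/- arXiv:1902.09450 — 12 statements merged into one kernel-verified Lean document; each statement's English description precedes it below -/
import Mathlib

section
/- Let G be an infinite group and W a nonempty finite subset of G. Then W admits no minimal asymptotic complement in G. -/
open Pointwise

def IsAsympCompl {G : Type*} [Group G] (W C : Set G) : Prop :=
  C.Nonempty ∧ ((Set.univ : Set G) \ (W * C)).Finite

def IsMinAsympCompl {G : Type*} [Group G] (W C : Set G) : Prop :=
  IsAsympCompl W C ∧ ∀ c ∈ C, ¬ IsAsympCompl W (C \ {c})

theorem stmt_1 {G : Type*} [Group G] [Infinite G] (W : Set G)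
    (hWne : W.Nonempty) (hWfin : W.Finite) :
    ¬ ∃ C : Set G, IsMinAsympCompl W C := by
  rintro ⟨C, ⟨⟨hCne, hfin⟩, hmin⟩⟩
  have hCinf : C.Infinite := by
    intro hCfin
    have : ((Set.univ : Set G) \ (W * C)).Infinite :=
      Set.infinite_univ.diff (hWfin.mul hCfin)
    exact this hfin
  obtain ⟨c, hc⟩ := hCne
  apply hmin c hc
  refine ⟨(hCinf.diff (Set.finite_singleton c)).nonempty, ?_⟩
  apply Set.Finite.subset (hfin.union (hWfin.mul (Set.finite_singleton c)))
  rintro x ⟨-, hx⟩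
  by_cases hxWC : x ∈ W * C
  · right
    obtain ⟨w, hw, c', hc', rfl⟩ := Set.mem_mul.mp hxWC
    rcases eq_or_ne c' c with rfl | hne
    · exact Set.mul_mem_mul hw rfl
    · exact absurd (Set.mul_mem_mul hw (show c' ∈ C \ {c} from ⟨hc', hne⟩)) hx
  · exact Or.inl ⟨trivial, hxWC⟩
end

section
/- Let G be an infinite group and W a subset of G such that G \ W is finite and nonempty. Then W admits a minimal complement of cardinality two, i.e., there exists x ∈ G such that W·{e,x} = G and neither W·{e} = G nor W·{x} = G. -/
open Pointwise

theorem stmt_2 {G : Type*} [Group G] [Infinite G] (W : Set G)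
    (hfin : ((Set.univ : Set G) \ W).Finite)
    (hne : ((Set.univ : Set G) \ W).Nonempty) :
    ∃ x : G, W * ({1, x} : Set G) = Set.univ ∧
      W * ({1} : Set G) ≠ Set.univ ∧ W * ({x} : Set G) ≠ Set.univ := by
  set F : Set G := (Set.univ : Set G) \ W with hF
  have hbig : (F⁻¹ * F).Finite := hfin.inv.mul hfin
  obtain ⟨x, hx⟩ := hbig.infinite_compl.nonempty
  refine ⟨x, ?_, ?_, ?_⟩
  · apply Set.eq_univ_of_forall
    intro g
    by_cases hg : g ∈ W
    · exact ⟨g, hg, 1, Or.inl rfl, mul_one g⟩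
    · have hgF : g ∈ F := ⟨trivial, hg⟩
      have h1 : g * x⁻¹ ∈ W := by
        by_contra h
        have : g * x⁻¹ ∈ F := ⟨trivial, h⟩
        exact hx ⟨(g * x⁻¹)⁻¹, Set.inv_mem_inv.mpr this, g, hgF, by group⟩
      exact ⟨g * x⁻¹, h1, x, Or.inr rfl, by group⟩
  · intro h
    obtain ⟨f, _, hfW⟩ := hne
    have : f ∈ W * ({1} : Set G) := h ▸ Set.mem_univ f
    obtain ⟨w, hw, y, hy, hwy⟩ := this
    simp only [Set.mem_singleton_iff] at hy
    subst hy
    simp only at hwy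
    rw [mul_one] at hwy
    exact hfW (hwy ▸ hw)
  · intro h
    obtain ⟨f, _, hfW⟩ := hne
    have : f * x ∈ W * ({x} : Set G) := h ▸ Set.mem_univ (f * x)
    obtain ⟨w, hw, y, hy, hwy⟩ := this
    simp only [Set.mem_singleton_iff] at hy
    subst hy
    simp only at hwy
    have : w = f := mul_right_cancel hwy
    exact hfW (this ▸ hw)
end

section
/- Let H be an infinite subgroup of a group G and C an asymptotic complement to H in G. Then H·C = G, i.e., C is in fact a complement to H. -/
open Pointwise

theorem stmt_4 {G : Type*} [Group G] (H : Subgroup G)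
    (hH : (H : Set G).Infinite) (C : Set G) (hCne : C.Nonempty)
    (hC : ((Set.univ : Set G) \ ((H : Set G) * C)).Finite) :
    (H : Set G) * C = Set.univ := by
  by_contra hne
  obtain ⟨g, -, hg⟩ : ∃ g, g ∈ (Set.univ : Set G) ∧ g ∉ (H : Set G) * C := by
    by_contra h
    push_neg at h
    exact hne (Set.eq_univ_of_forall fun x => h x trivial)
  have hsub : (fun h : G => h * g) '' (H : Set G) ⊆
      (Set.univ : Set G) \ ((H : Set G) * C) := by
    rintro x ⟨h, hh, rfl⟩
    refine ⟨trivial, fun hmem => hg ?_⟩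
    obtain ⟨h', hh', c, hc, hEq⟩ := hmem
    refine ⟨h⁻¹ * h', H.mul_mem (H.inv_mem hh) hh', c, hc, ?_⟩
    simp only at hEq ⊢
    rw [mul_assoc, hEq]
    group
  have : ((fun h : G => h * g) '' (H : Set G)).Infinite :=
    hH.image (Set.injOn_of_injective (mul_left_injective g))
  exact this (hC.subset hsub)
end

section
/- Let H be an infinite subgroup of a group G. Then every asymptotic complement C to H in G contains a minimal asymptotic complement to H; in particular, a set of representatives C' ⊆ C for the right cosets {Hc : c ∈ C} is a minimal asymptotic complement to H. -/
open Pointwise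

private theorem key_min {G : Type*} [Group G] (H : Subgroup G)
    (hH : (H : Set G).Infinite) (C : Set G)
    (hC : IsAsympCompl (H : Set G) C) (C' : Set G) (hsub : C' ⊆ C)
    (hne : C'.Nonempty)
    (hcov : ∀ c ∈ C, ∃ c' ∈ C', c * c'⁻¹ ∈ H)
    (hdist : ∀ c₁ ∈ C', ∀ c₂ ∈ C', c₁ * c₂⁻¹ ∈ H → c₁ = c₂) :
    IsMinAsympCompl (H : Set G) C' := by
  have hprod : (H : Set G) * C ⊆ (H : Set G) * C' := by
    rintro x hx
    rw [Set.mem_mul] at hx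
    obtain ⟨h, hh, c, hc, rfl⟩ := hx
    obtain ⟨c', hc', hmem⟩ := hcov c hc
    refine Set.mem_mul.2 ⟨h * (c * c'⁻¹), mul_mem hh hmem, c', hc', by group⟩
  constructor
  · refine ⟨hne, hC.2.subset ?_⟩
    intro x hx
    exact ⟨hx.1, fun hx' => hx.2 (hprod hx')⟩
  · rintro c' hc' ⟨-, hfin⟩
    have himg : ((· * c') '' (H : Set G)).Infinite :=
      hH.image ((mul_left_injective c').injOn)
    refine himg (hfin.subset ?_)
    rintro x ⟨h, hh, rfl⟩
    refine ⟨Set.mem_univ _, fun hx => ?_⟩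
    rw [Set.mem_mul] at hx
    obtain ⟨h₂, hh₂, c₂, ⟨hc₂, hc₂ne⟩, heq⟩ := hx
    have hmem : c' * c₂⁻¹ ∈ H := by
      have h1 : h * c' = h₂ * c₂ := heq.symm
      have h2 : c' = h⁻¹ * (h₂ * c₂) := by rw [← h1]; group
      have h3 : c' * c₂⁻¹ = h⁻¹ * h₂ := by rw [h2]; group
      rw [h3]
      exact mul_mem (inv_mem hh) hh₂
    have := hdist c₂ hc₂ c' hc' (by simpa using inv_mem hmem)
    exact hc₂ne (by simp [this])

theorem stmt_5 {G : Type*} [Group G] (H : Subgroup G)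
    (hH : (H : Set G).Infinite) (C : Set G)
    (hC : IsAsympCompl (H : Set G) C) :
    (∃ C' ⊆ C, IsMinAsympCompl (H : Set G) C') ∧
      ∀ C' ⊆ C, C'.Nonempty →
        (∀ c ∈ C, ∃ c' ∈ C', c * c'⁻¹ ∈ H) →
        (∀ c₁ ∈ C', ∀ c₂ ∈ C', c₁ * c₂⁻¹ ∈ H → c₁ = c₂) →
        IsMinAsympCompl (H : Set G) C' := by
  have main := key_min H hH C hC
  refine ⟨?_, main⟩
  -- build a set of coset representatives inside C
  let s : Setoid C :=
    ⟨fun c₁ c₂ => (c₁ : G) * (c₂ : G)⁻¹ ∈ H, by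
      constructor
      · intro x; simpa using H.one_mem
      · intro x y hxy
        simpa using inv_mem hxy
      · intro x y z hxy hyz
        have := mul_mem hxy hyz
        simpa [mul_assoc] using this⟩
  let C' : Set G := Subtype.val '' (Set.range (fun q : Quotient s => (q.out : C)))
  have hsub : C' ⊆ C := by
    rintro x ⟨c, -, rfl⟩; exact c.2
  have hrep : ∀ c ∈ C, ∃ c' ∈ C', c * c'⁻¹ ∈ H := by
    intro c hc
    refine ⟨(Quotient.mk s ⟨c, hc⟩).out, ⟨_, ⟨_, rfl⟩, rfl⟩, ?_⟩
    have : s.r ⟨c, hc⟩ (Quotient.mk s ⟨c, hc⟩).out :=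
      Setoid.symm (Quotient.mk_out (s := s) ⟨c, hc⟩)
    exact this
  have hne : C'.Nonempty := by
    obtain ⟨c, hc⟩ := hC.1
    obtain ⟨c', hc', -⟩ := hrep c hc
    exact ⟨c', hc'⟩
  have hdist : ∀ c₁ ∈ C', ∀ c₂ ∈ C', c₁ * c₂⁻¹ ∈ H → c₁ = c₂ := by
    rintro _ ⟨x₁, ⟨q₁, rfl⟩, rfl⟩ _ ⟨x₂, ⟨q₂, rfl⟩, rfl⟩ hmem
    have : q₁ = q₂ := by
      rw [← Quotient.out_eq q₁, ← Quotient.out_eq q₂]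
      exact Quotient.sound hmem
    rw [this]
  exact ⟨C', hsub, main C' hsub hne hrep hdist⟩
end

section
/- Let G be an infinite group, g ∈ G, and H an infinite subgroup of G. Then every asymptotic complement to the left coset gH in G contains a minimal asymptotic complement to gH. -/
open Pointwise

lemma mem_gHC {G : Type*} [Group G] (g : G) (H : Subgroup G) (C0 : Set G) (x : G) :
    x ∈ ({g} : Set G) * (H : Set G) * C0 ↔ ∃ h ∈ H, ∃ c ∈ C0, g * h * c = x := by
  constructor
  · rintro ⟨gh, ⟨a, ha, h, hh, rfl⟩, c, hc, rfl⟩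
    rcases ha with rfl
    exact ⟨h, hh, c, hc, rfl⟩
  · rintro ⟨h, hh, c, hc, rfl⟩
    exact ⟨g * h, ⟨g, rfl, h, hh, rfl⟩, c, hc, rfl⟩

theorem stmt_6 {G : Type*} [Group G] [Infinite G] (g : G) (H : Subgroup G)
    (hH : (H : Set G).Infinite) (C : Set G)
    (hC : IsAsympCompl (({g} : Set G) * (H : Set G)) C) :
    ∃ C' ⊆ C, IsMinAsympCompl (({g} : Set G) * (H : Set G)) C' := by
  obtain ⟨hCne, hfin⟩ := hC
  -- key: W * C = univ
  have key : ∀ x : G, x ∈ ({g} : Set G) * (H : Set G) * C := by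
    intro x
    by_contra hx
    have hsub : (fun h : G => g * h * (g⁻¹ * x)) '' (H : Set G) ⊆
        Set.univ \ (({g} : Set G) * (H : Set G) * C) := by
      rintro _ ⟨h, hh, rfl⟩
      refine ⟨trivial, fun hmem => hx ?_⟩
      rw [mem_gHC] at hmem ⊢
      obtain ⟨h', hh', c, hc, hEq⟩ := hmem
      refine ⟨h⁻¹ * h', mul_mem (inv_mem hh) hh', c, hc, ?_⟩
      have h1 : h' * c = h * (g⁻¹ * x) := by
        have h2 : g * (h' * c) = g * (h * (g⁻¹ * x)) := by
          rw [← mul_assoc, ← mul_assoc]; exact hEq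
        exact mul_left_cancel h2
      have h3 : g * (h⁻¹ * h') * c = g * h⁻¹ * (h' * c) := by group
      rw [h3, h1]; group
    have hinj : Set.InjOn (fun h : G => g * h * (g⁻¹ * x)) (H : Set G) := by
      intro a _ b _ hab
      simpa using hab
    exact (hH.image hinj) (hfin.subset hsub)
  -- quotient by right cosets of H
  set Q := Quotient (QuotientGroup.rightRel H) with hQ
  set q : G → Q := Quotient.mk _ with hq
  have hqrel : ∀ a b : G, q a = q b ↔ b * a⁻¹ ∈ H := by
    intro a b
    rw [hq, Quotient.eq]
    exact QuotientGroup.rightRel_apply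
  have hsurj : ∀ t : Q, ∃ c, c ∈ C ∧ q c = t := by
    intro t
    obtain ⟨h, hh, c, hc, hEq⟩ := (mem_gHC g H C (g * t.out)).mp (key (g * t.out))
    refine ⟨c, hc, ?_⟩
    rw [← Quotient.out_eq t, ← hq]
    rw [hqrel]
    have : t.out = h * c := by
      have := mul_left_cancel (show g * (h * c) = g * t.out by rw [← mul_assoc]; exact hEq)
      exact this.symm
    rw [this]
    simpa using hh
  choose s hsC hsq using hsurj
  refine ⟨Set.range s, by rintro _ ⟨t, rfl⟩; exact hsC t, ?_, ?_⟩
  · -- asymptotic complement: covers everything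
    refine ⟨⟨s (q 1), Set.mem_range_self _⟩, ?_⟩
    have : Set.univ \ (({g} : Set G) * (H : Set G) * Set.range s) = ∅ := by
      rw [Set.diff_eq_empty]
      intro x _
      rw [mem_gHC]
      set c := s (q (g⁻¹ * x)) with hc
      have hqc : q c = q (g⁻¹ * x) := hsq _
      rw [hqrel] at hqc
      refine ⟨(g⁻¹ * x) * c⁻¹, hqc, c, Set.mem_range_self _, ?_⟩
      group
    rw [this]
    exact Set.finite_empty
  · -- minimality
    rintro c hcmem ⟨_, hfin'⟩
    obtain ⟨t, rfl⟩ := hcmem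
    have hsub : (fun h : G => g * h * s t) '' (H : Set G) ⊆
        Set.univ \ (({g} : Set G) * (H : Set G) * (Set.range s \ {s t})) := by
      rintro _ ⟨h, hh, rfl⟩
      refine ⟨trivial, fun hmem => ?_⟩
      rw [mem_gHC] at hmem
      obtain ⟨h', hh', c', ⟨⟨t', rfl⟩, hne⟩, hEq⟩ := hmem
      apply hne
      have h1 : s t' * (s t)⁻¹ ∈ H := by
        have h2 : h' * s t' = h * s t :=
          mul_left_cancel (show g * (h' * s t') = g * (h * s t) by
            rw [← mul_assoc, ← mul_assoc]; exact hEq)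
        have h3 : s t' * (s t)⁻¹ = h'⁻¹ * h := by
          have : s t' = h'⁻¹ * (h * s t) := by rw [← h2]; group
          rw [this]; group
        rw [h3]
        exact mul_mem (inv_mem hh') hh
      have : q (s t) = q (s t') := (hqrel _ _).mpr h1
      rw [hsq, hsq] at this
      rw [Set.mem_singleton_iff, ← this]
    have hinj : Set.InjOn (fun h : G => g * h * s t) (H : Set G) := by
      intro a _ b _ hab
      simpa using hab
    exact (hH.image hinj) (hfin'.subset hsub)
end

section
/- Let G be an infinite group and W ⊆ G such that G \ W is infinite and W contains a subgroup H of G of finite index in G with H infinite. Then W admits a minimal asymptotic complement and a minimal complement in G. -/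
/-!
A subgroup `H ≤ W` of finite index has a finite right transversal `T`, and then
`W * T ⊇ H * T = G`, so `W` has a finite complement, which is in particular an asymptotic
complement. Any finite set with a property `P` contains a subset with `P` that is minimal under
removing single points, which yields the minimal (asymptotic) complements.
-/

open Pointwise

def IsCompl' {G : Type*} [Group G] (W C : Set G) : Prop :=
  C.Nonempty ∧ W * C = Set.univ

def IsMinCompl {G : Type*} [Group G] (W C : Set G) : Prop :=
  IsCompl' W C ∧ ∀ c ∈ C, ¬ IsCompl' W (C \ {c})

theorem Set.Finite.exists_subset_forall_not_diff_singleton {α : Type*} {P : Set α → Prop}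
    {C : Set α} (hC : C.Finite) (hP : P C) :
    ∃ D ⊆ C, P D ∧ ∀ c ∈ D, ¬ P (D \ {c}) := by
  have hfin : {D | D ⊆ C ∧ P D}.Finite := hC.finite_subsets.subset fun _ hD ↦ hD.1
  obtain ⟨D, ⟨hDC, hPD⟩, hmin⟩ := hfin.exists_minimal ⟨C, subset_rfl, hP⟩
  refine ⟨D, hDC, hPD, fun c hc hPc ↦ ?_⟩
  have hsub : D ⊆ D \ {c} := hmin ⟨Set.sdiff_subset.trans hDC, hPc⟩ Set.sdiff_subset
  exact (hsub hc).2 rfl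

section Complements

variable {G : Type*} [Group G] {W C : Set G}

theorem IsCompl'.isAsympCompl (h : IsCompl' W C) : IsAsympCompl W C :=
  ⟨h.1, by simp [h.2]⟩

theorem exists_isMinCompl_of_finite (hC : C.Finite) (h : IsCompl' W C) :
    ∃ D, IsMinCompl W D :=
  let ⟨D, _, hD, hmin⟩ := hC.exists_subset_forall_not_diff_singleton h
  ⟨D, hD, hmin⟩

theorem exists_isMinAsympCompl_of_finite (hC : C.Finite) (h : IsAsympCompl W C) :
    ∃ D, IsMinAsympCompl W D :=
  let ⟨D, _, hD, hmin⟩ := hC.exists_subset_forall_not_diff_singleton h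
  ⟨D, hD, hmin⟩

theorem Subgroup.exists_finite_isCompl' (H : Subgroup G) [H.FiniteIndex] :
    ∃ C : Set G, C.Finite ∧ IsCompl' (H : Set G) C := by
  have : Finite (Quotient (QuotientGroup.rightRel H)) :=
    .of_equiv (G ⧸ H) (QuotientGroup.quotientRightRelEquivQuotientLeftRel H).symm
  refine ⟨Set.range (Quotient.out : Quotient (QuotientGroup.rightRel H) → G),
    Set.finite_range _, ⟨_, Quotient.mk'' 1, rfl⟩, ?_⟩
  exact (isComplement_range_right Quotient.out_eq').mul_eq

theorem exists_finite_isCompl'_of_subgroup_subset (H : Subgroup G) [H.FiniteIndex]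
    (hHW : (H : Set G) ⊆ W) : ∃ C : Set G, C.Finite ∧ IsCompl' W C := by
  obtain ⟨C, hC, hne, hHC⟩ := H.exists_finite_isCompl'
  exact ⟨C, hC, hne, Set.eq_univ_of_univ_subset (hHC ▸ Set.mul_subset_mul_right hHW)⟩

end Complements

theorem stmt_7_general {G : Type*} [Group G] (W : Set G)
    (H : Subgroup G) (hfi : H.FiniteIndex)
    (hHW : (H : Set G) ⊆ W) :
    (∃ C : Set G, IsMinAsympCompl W C) ∧ ∃ C : Set G, IsMinCompl W C := by
  obtain ⟨C, hC, hWC⟩ := exists_finite_isCompl'_of_subgroup_subset H hHW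
  exact ⟨exists_isMinAsympCompl_of_finite hC hWC.isAsympCompl,
    exists_isMinCompl_of_finite hC hWC⟩

theorem stmt_7 {G : Type*} [Group G] [Infinite G] (W : Set G)
    (hWc : ((Set.univ : Set G) \ W).Infinite)
    (H : Subgroup G) (hfi : H.FiniteIndex) (hHinf : (H : Set G).Infinite)
    (hHW : (H : Set G) ⊆ W) :
    (∃ C : Set G, IsMinAsympCompl W C) ∧ ∃ C : Set G, IsMinCompl W C :=
  stmt_7_general W H hfi hHW
end

section
/- Let W be the union of a nonzero subgroup nℤ (n ≠ 0) of ℤ and a finite subset of ℤ, with ℤ \ W infinite. Then W admits a minimal asymptotic complement in ℤ. -/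
open Pointwise

def IsAddAsympCompl (W C : Set ℤ) : Prop :=
  C.Nonempty ∧ ((Set.univ : Set ℤ) \ (W + C)).Finite

def IsAddMinAsympCompl (W C : Set ℤ) : Prop :=
  IsAddAsympCompl W C ∧ ∀ c ∈ C, ¬ IsAddAsympCompl W (C \ {c})

/-!
Since `W ⊇ nℤ`, the finite set `{0, …, |n| - 1}` of residues is already a complement with
`W + C = ℤ`. Among its subsets that are still asymptotic complements, a minimal one is a minimal
asymptotic complement, because removing a point yields a smaller subset.
-/

lemma IsAddAsympCompl.mono_left {W W' C : Set ℤ} (hWW' : W ⊆ W') (h : IsAddAsympCompl W C) :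
    IsAddAsympCompl W' C :=
  ⟨h.1, h.2.subset (Set.sdiff_subset_sdiff_right (Set.add_subset_add_right hWW'))⟩

lemma isAddAsympCompl_of_add_eq_univ {W C : Set ℤ} (h : W + C = Set.univ) :
    IsAddAsympCompl W C := by
  refine ⟨?_, by simp [h]⟩
  obtain ⟨x, -, c, hc, -⟩ := h.symm ▸ Set.mem_univ (0 : ℤ)
  exact ⟨c, hc⟩

lemma setOf_dvd_add_Ico_abs_eq_univ {n : ℤ} (hn : n ≠ 0) :
    {x : ℤ | n ∣ x} + Set.Ico 0 |n| = Set.univ := by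
  refine Set.eq_univ_of_forall fun x => ⟨x - x % n, ?_, x % n, ?_, by ring⟩
  · exact Int.dvd_self_sub_emod
  · exact ⟨Int.emod_nonneg x hn, Int.emod_lt_abs x hn⟩

lemma exists_subset_isAddMinAsympCompl {W : Set ℤ} {C : Finset ℤ}
    (hC : IsAddAsympCompl W C) : ∃ D ⊆ C, IsAddMinAsympCompl W D := by
  obtain ⟨D, hDC, hD⟩ :=
    exists_minimal_le_of_wellFoundedLT (fun D : Finset ℤ => IsAddAsympCompl W D) C hC
  refine ⟨D, hDC, hD.prop, fun c hc hErase => ?_⟩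
  rw [← Finset.coe_singleton, ← Finset.coe_sdiff, Finset.sdiff_singleton_eq_erase] at hErase
  exact hD.not_prop_of_lt (Finset.erase_ssubset hc) hErase

theorem stmt_8_general (n : ℤ) (hn : n ≠ 0) (F : Set ℤ)
    (W : Set ℤ) (hW : W = {x : ℤ | n ∣ x} ∪ F) :
    ∃ C : Set ℤ, IsAddMinAsympCompl W C := by
  have hResidues : IsAddAsympCompl W (Finset.Ico 0 |n| : Finset ℤ) := by
    rw [Finset.coe_Ico, hW]
    exact (isAddAsympCompl_of_add_eq_univ (setOf_dvd_add_Ico_abs_eq_univ hn)).mono_left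
      Set.subset_union_left
  obtain ⟨D, -, hD⟩ := exists_subset_isAddMinAsympCompl hResidues
  exact ⟨D, hD⟩

theorem stmt_8 (n : ℤ) (hn : n ≠ 0) (F : Set ℤ) (hF : F.Finite)
    (W : Set ℤ) (hW : W = {x : ℤ | n ∣ x} ∪ F)
    (hWc : ((Set.univ : Set ℤ) \ W).Infinite) :
    ∃ C : Set ℤ, IsAddMinAsympCompl W C :=
  stmt_8_general n hn F W hW
end

section
/- Let W ⊆ ℤ be the set of integers that are not prime. Then {0, 1} is a minimal asymptotic complement to W, and {0, 1, -1} is a minimal complement to W. -/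
open Pointwise

def IsAddCompl (W C : Set ℤ) : Prop :=
  C.Nonempty ∧ W + C = Set.univ

def IsAddMinCompl (W C : Set ℤ) : Prop :=
  IsAddCompl W C ∧ ∀ c ∈ C, ¬ IsAddCompl W (C \ {c})

private def PP (x : ℤ) : Prop := ∃ p : ℕ, Nat.Prime p ∧ (p : ℤ) = x

private lemma mem_addC {W C : Set ℤ} {x : ℤ} : x ∈ W + C ↔ ∃ c ∈ C, x - c ∈ W := by
  constructor
  · rintro ⟨w, hw, c, hc, rfl⟩; exact ⟨c, hc, by simpa using hw⟩
  · rintro ⟨c, hc, hw⟩; exact ⟨x - c, hw, c, hc, by ring⟩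

private lemma PP_nat {n : ℕ} (h : Nat.Prime n) : PP (n : ℤ) := ⟨n, h, rfl⟩

private lemma PP2 : PP 2 := ⟨2, by norm_num⟩
private lemma PP3 : PP 3 := ⟨3, by norm_num⟩
private lemma PP5 : PP 5 := ⟨5, by norm_num⟩
private lemma notPP4 : ¬ PP 4 := by
  rintro ⟨p, hp, h⟩
  have : p = 4 := by exact_mod_cast h
  subst this; norm_num at hp

private lemma consec {x : ℤ} (h1 : PP x) (h2 : PP (x - 1)) : x = 3 := by
  obtain ⟨p, hp, hpx⟩ := h1
  obtain ⟨q, hq, hqx⟩ := h2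
  have hpq : q + 1 = p := by
    have : (q : ℤ) + 1 = (p : ℤ) := by omega
    exact_mod_cast this
  have h2p := hp.two_le
  have h2q := hq.two_le
  rcases hp.eq_two_or_odd with hp2 | hpodd
  · omega
  · rcases hq.eq_two_or_odd with hq2 | hqodd
    · have : p = 3 := by omega
      subst this
      have : ((3 : ℕ) : ℤ) = x := hpx
      omega
    · omega

private lemma primes_infinite : {x : ℤ | PP x}.Infinite := by
  have h1 : {p : ℕ | Nat.Prime p}.Infinite := Nat.infinite_setOf_prime
  have h2 := h1.image (f := fun p : ℕ => (p : ℤ)) (Nat.cast_injective.injOn)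
  refine h2.mono ?_
  rintro x ⟨p, hp, rfl⟩
  exact PP_nat hp

theorem stmt_11 (W : Set ℤ)
    (hW : W = {x : ℤ | ¬ ∃ p : ℕ, Nat.Prime p ∧ (p : ℤ) = x}) :
    IsAddMinAsympCompl W ({0, 1} : Set ℤ) ∧
      IsAddMinCompl W ({0, 1, -1} : Set ℤ) := by
  have hWmem : ∀ x : ℤ, x ∈ W ↔ ¬ PP x := by
    intro x; rw [hW]; rfl
  constructor
  · constructor
    · constructor
      · exact ⟨0, by simp⟩
      · refine Set.Finite.subset (Set.finite_singleton 3) ?_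
        rintro x ⟨-, hx⟩
        rw [mem_addC] at hx
        push_neg at hx
        have h0 := hx 0 (by simp)
        have h1 := hx 1 (by simp)
        rw [hWmem] at h0 h1
        push_neg at h0 h1
        have := consec h0 (by simpa using h1)
        simp only [Set.mem_singleton_iff]
        omega
    · intro c hc
      rintro ⟨-, hfin⟩
      simp only [Set.mem_insert_iff, Set.mem_singleton_iff] at hc
      rcases hc with rfl | rfl
      · -- removing 0, left with {1}; misses p+1 for every prime p
        have hsub : (fun x => x + 1) '' {x : ℤ | PP x} ⊆
            (Set.univ : Set ℤ) \ (W + (({0, 1} : Set ℤ) \ {0})) := by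
          rintro y ⟨x, hx, rfl⟩
          refine ⟨trivial, ?_⟩
          rw [mem_addC]
          rintro ⟨d, ⟨hd01, hd0⟩, hw⟩
          simp only [Set.mem_insert_iff, Set.mem_singleton_iff] at hd01
          simp only [Set.mem_singleton_iff] at hd0
          rcases hd01 with rfl | rfl
          · exact hd0 rfl
          · rw [hWmem] at hw; exact hw (by simpa using hx)
        exact ((primes_infinite.image (add_left_injective 1).injOn).mono hsub) hfin
      · -- removing 1, left with {0}; misses every prime
        have hsub : {x : ℤ | PP x} ⊆
            (Set.univ : Set ℤ) \ (W + (({0, 1} : Set ℤ) \ {1})) := by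
          rintro x hx
          refine ⟨trivial, ?_⟩
          rw [mem_addC]
          rintro ⟨d, ⟨hd01, hd1⟩, hw⟩
          simp only [Set.mem_insert_iff, Set.mem_singleton_iff] at hd01
          simp only [Set.mem_singleton_iff] at hd1
          rcases hd01 with rfl | rfl
          · rw [hWmem] at hw; exact hw (by simpa using hx)
          · exact hd1 rfl
        exact (primes_infinite.mono hsub) hfin
  · constructor
    · constructor
      · exact ⟨0, by simp⟩
      · ext x
        simp only [Set.mem_univ, iff_true]
        rw [mem_addC]
        by_cases h0 : PP x
        · by_cases h1 : PP (x - 1)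
          · have hx3 := consec h0 h1
            refine ⟨-1, by simp, ?_⟩
            rw [hWmem]
            subst hx3
            norm_num
            exact notPP4
          · exact ⟨1, by simp, by rw [hWmem]; exact h1⟩
        · exact ⟨0, by simp, by rw [hWmem]; simpa using h0⟩
    · intro c hc
      rintro ⟨-, heq⟩
      simp only [Set.mem_insert_iff, Set.mem_singleton_iff] at hc
      rcases hc with rfl | rfl | rfl
      · -- remove 0, witness 4
        have h4 : (4 : ℤ) ∈ W + (({0, 1, -1} : Set ℤ) \ {0}) := heq ▸ trivial
        rw [mem_addC] at h4
        obtain ⟨d, ⟨hdC, hdc⟩, hw⟩ := h4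
        simp only [Set.mem_insert_iff, Set.mem_singleton_iff] at hdC
        simp only [Set.mem_singleton_iff] at hdc
        rw [hWmem] at hw
        rcases hdC with rfl | rfl | rfl
        · exact hdc rfl
        · exact hw (by norm_num; exact PP3)
        · exact hw (by norm_num; exact PP5)
      · -- remove 1, witness 2
        have h2 : (2 : ℤ) ∈ W + (({0, 1, -1} : Set ℤ) \ {1}) := heq ▸ trivial
        rw [mem_addC] at h2
        obtain ⟨d, ⟨hdC, hdc⟩, hw⟩ := h2
        simp only [Set.mem_insert_iff, Set.mem_singleton_iff] at hdC
        simp only [Set.mem_singleton_iff] at hdc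
        rw [hWmem] at hw
        rcases hdC with rfl | rfl | rfl
        · exact hw (by norm_num; exact PP2)
        · exact hdc rfl
        · exact hw (by norm_num; exact PP3)
      · -- remove -1, witness 3
        have h3 : (3 : ℤ) ∈ W + (({0, 1, -1} : Set ℤ) \ {-1}) := heq ▸ trivial
        rw [mem_addC] at h3
        obtain ⟨d, ⟨hdC, hdc⟩, hw⟩ := h3
        simp only [Set.mem_insert_iff, Set.mem_singleton_iff] at hdC
        simp only [Set.mem_singleton_iff] at hdc
        rw [hWmem] at hw
        rcases hdC with rfl | rfl | rfl
        · exact hw (by norm_num; exact PP3)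
        · exact hw (by norm_num; exact PP2)
        · exact hdc rfl
end

section
/- Let W = ℤ_{≤3} ∪ ⋃_{k≥1} [((k-1)(k+2))/2 + 2^{k+1}, ((k-1)(k+2))/2 + 2^{k+1} + k]. Then for any asymptotic complement C to W in ℤ and any three elements a < b < c of C, the set C \ {b} is also an asymptotic complement to W; moreover W admits no minimal asymptotic complement in ℤ. -/
open Pointwise

def blockStart (k : ℕ) : ℤ := ((k : ℤ) - 1) * ((k : ℤ) + 2) / 2 + 2 ^ (k + 1)

/-!
Write `s_k = blockStart k`, so that `s_(k+1) = s_k + (k + 1) + 2 ^ (k + 1)`: the blocks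
`[s_k, s_k + k]` of `W` and the gaps of length `2 ^ (k + 1)` between them both grow without bound.
Let `a < b < c` lie in a complement `C` and `n = w + b` with `w ∈ W`. If `n` is small, `n - a ≤ 3`
lies in `W`. If `w` is large, its block is longer than `c - a`, so `w + (b - a)` or `w - (c - b)`
lies in the same block and `n` is represented through `a` or `c`. Hence `b` is redundant, and a
minimal complement would have at most two elements; but `W + C` misses a point of every
sufficiently long gap when `C` is finite.
-/

theorem IsAddAsympCompl.diff_singleton {W C : Set ℤ} (hC : IsAddAsympCompl W C) {a b c t M : ℤ}
    (ha : a ∈ C) (hc : c ∈ C) (hab : a < b) (hbc : b < c) (hlow : Set.Iic t ⊆ W)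
    (hshift : ∀ w ∈ W, M < w → w + (b - a) ∈ W ∨ w - (c - b) ∈ W) :
    IsAddAsympCompl W (C \ {b}) := by
  have ha' : a ∈ C \ {b} := ⟨ha, hab.ne⟩
  have hc' : c ∈ C \ {b} := ⟨hc, hbc.ne'⟩
  refine ⟨⟨a, ha'⟩, (hC.2.union (Set.finite_Icc (a + t + 1) (b + M))).subset ?_⟩
  rintro n ⟨-, hn⟩
  by_cases hnWC : n ∈ W + C
  swap
  · exact Or.inl ⟨trivial, hnWC⟩
  obtain ⟨w, hw, d, hd, rfl⟩ := Set.mem_add.1 hnWC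
  obtain rfl : d = b := by
    by_contra hne
    exact hn (Set.add_mem_add hw ⟨hd, hne⟩)
  refine Or.inr ⟨not_lt.1 fun hlt => hn ?_, not_lt.1 fun hgt => hn ?_⟩
  · convert Set.add_mem_add (hlow (show w + d - a ≤ t by omega)) ha' using 1
    ring
  · rcases hshift w hw (by omega) with h | h
    · convert Set.add_mem_add h ha' using 1
      ring
    · convert Set.add_mem_add h hc' using 1
      ring

theorem not_isAddAsympCompl_of_finite {W C : Set ℤ}
    (hgap : ∀ L M : ℤ, ∃ n, M < n ∧ ∀ w ∈ W, w ∉ Set.Icc (n - L) n) (hC : C.Finite) :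
    ¬ IsAddAsympCompl W C := by
  rintro ⟨-, hfin⟩
  obtain ⟨u, hu⟩ := hC.bddAbove
  obtain ⟨l, hl⟩ := hC.bddBelow
  obtain ⟨B, hB⟩ := hfin.bddAbove
  obtain ⟨n, hBn, hn⟩ := hgap (u - l) (B - l)
  have hmiss : n + l ∈ (Set.univ : Set ℤ) \ (W + C) := by
    refine ⟨trivial, ?_⟩
    rintro ⟨w, hw, d, hd, hwd⟩
    exact hn w hw ⟨by linarith [hu hd], by linarith [hl hd]⟩
  linarith [hB hmiss]

theorem blockStart_succ (k : ℕ) :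
    blockStart (k + 1) = blockStart k + (k + 1) + 2 ^ (k + 1) := by
  have hk : ((k + 1 : ℕ) - 1 : ℤ) * ((k + 1 : ℕ) + 2) = ((k : ℤ) - 1) * (k + 2) + 2 * (k + 1) := by
    push_cast; ring
  rw [blockStart, blockStart, hk, pow_succ 2 (k + 1)]
  omega

theorem blockStart_strictMono : StrictMono blockStart :=
  strictMono_nat_of_lt_succ fun k => by
    rw [blockStart_succ]
    have := pow_pos (two_pos : (0 : ℤ) < 2) (k + 1)
    omega

theorem blockEnd_monotone : Monotone fun k : ℕ => blockStart k + k :=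
  monotone_nat_of_le_succ fun k => by
    rw [blockStart_succ]
    have := pow_pos (two_pos : (0 : ℤ) < 2) (k + 1)
    push_cast
    omega

theorem natCast_lt_blockStart (k : ℕ) : (k : ℤ) < blockStart k := by
  induction k with
  | zero => decide
  | succ k ih =>
    rw [blockStart_succ]
    have := pow_pos (two_pos : (0 : ℤ) < 2) (k + 1)
    push_cast
    omega

def blockSet : Set ℤ :=
  {n : ℤ | n ≤ 3} ∪ ⋃ k ∈ {k : ℕ | 1 ≤ k}, Set.Icc (blockStart k) (blockStart k + k)

theorem mem_blockSet_iff {x : ℤ} :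
    x ∈ blockSet ↔ x ≤ 3 ∨ ∃ k : ℕ, 1 ≤ k ∧ blockStart k ≤ x ∧ x ≤ blockStart k + k := by
  simp only [blockSet, Set.mem_union, Set.mem_ofPred_eq, Set.mem_iUnion, Set.mem_Icc, exists_prop]

theorem Iic_three_subset_blockSet : Set.Iic 3 ⊆ blockSet :=
  Set.subset_union_left

theorem blockSet_add_or_sub_mem {x y : ℤ} (hx : 0 ≤ x) (hy : 0 ≤ y) :
    ∃ M, ∀ w ∈ blockSet, M < w → w + x ∈ blockSet ∨ w - y ∈ blockSet := by
  set K := (x + y).toNat + 1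
  refine ⟨blockStart K + K, fun w hw hMw => ?_⟩
  have hK := natCast_lt_blockStart K
  obtain h3 | ⟨k, hk1, hkw, hwk⟩ := mem_blockSet_iff.1 hw
  · omega
  have hKk : K ≤ k := by
    by_contra! hkK
    have : blockStart k + k ≤ blockStart K + K := blockEnd_monotone hkK.le
    omega
  have hKk' : (K : ℤ) ≤ k := by exact_mod_cast hKk
  -- the block `[s_k, s_k + k]` containing `w` has more than `x + y` elements
  rw [mem_blockSet_iff, mem_blockSet_iff]
  by_cases hfit : w + x ≤ blockStart k + k
  · exact Or.inl (Or.inr ⟨k, hk1, by omega, hfit⟩)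
  · exact Or.inr (Or.inr ⟨k, hk1, by omega, by omega⟩)

theorem notMem_blockSet_of_gap {k : ℕ} (hk : 1 ≤ k) {w : ℤ} (hlo : blockStart k + k < w)
    (hhi : w < blockStart (k + 1)) : w ∉ blockSet := by
  have h1 : blockStart 1 ≤ blockStart k := blockStart_strictMono.monotone hk
  have h4 : blockStart 1 = 4 := by decide
  rw [mem_blockSet_iff]
  rintro (h3 | ⟨j, -, hjw, hwj⟩)
  · omega
  · rcases le_or_gt j k with hjk | hkj
    · have : blockStart j + j ≤ blockStart k + k := blockEnd_monotone hjk
      omega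
    · have : blockStart (k + 1) ≤ blockStart j := blockStart_strictMono.monotone hkj
      omega

theorem blockSet_long_gaps (L M : ℤ) :
    ∃ n, M < n ∧ ∀ w ∈ blockSet, w ∉ Set.Icc (n - L) n := by
  obtain ⟨k, hLk, hMk, hk⟩ : ∃ k : ℕ, L < k ∧ M < k ∧ 1 ≤ k :=
    ⟨(max L M).toNat + 1, by omega, by omega, by omega⟩
  have hpow : (k : ℤ) < 2 ^ (k + 1) := by
    exact_mod_cast (Nat.lt_two_pow_self).trans (Nat.pow_lt_pow_right one_lt_two k.lt_succ_self)
  have hstep := blockStart_succ k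
  have hstart := natCast_lt_blockStart k
  refine ⟨blockStart (k + 1) - 1, by omega, fun w hw hwI => ?_⟩
  rw [Set.mem_Icc] at hwI
  exact notMem_blockSet_of_gap hk (by omega) (by omega) hw

theorem IsAddAsympCompl.blockSet_diff_singleton {C : Set ℤ} (hC : IsAddAsympCompl blockSet C)
    {a b c : ℤ} (ha : a ∈ C) (hc : c ∈ C) (hab : a < b) (hbc : b < c) :
    IsAddAsympCompl blockSet (C \ {b}) :=
  have ⟨_, hM⟩ := blockSet_add_or_sub_mem (sub_nonneg.2 hab.le) (sub_nonneg.2 hbc.le)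
  hC.diff_singleton ha hc hab hbc Iic_three_subset_blockSet hM

theorem stmt_13 (W : Set ℤ)
    (hW : W = {n : ℤ | n ≤ 3} ∪
      ⋃ k ∈ {k : ℕ | 1 ≤ k}, Set.Icc (blockStart k) (blockStart k + k)) :
    (∀ C : Set ℤ, IsAddAsympCompl W C →
        ∀ a ∈ C, ∀ b ∈ C, ∀ c ∈ C, a < b → b < c →
          IsAddAsympCompl W (C \ {b})) ∧
      ¬ ∃ C : Set ℤ, IsAddMinAsympCompl W C := by
  subst hW
  refine ⟨fun C hC a ha b _ c hc hab hbc => hC.blockSet_diff_singleton ha hc hab hbc, ?_⟩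
  rintro ⟨C, hC, hmin⟩
  refine not_isAddAsympCompl_of_finite blockSet_long_gaps (Set.finite_of_forall_not_lt_lt ?_) hC
  exact fun a ha b hb c hc hab hbc => hmin b hb (hC.blockSet_diff_singleton ha hc hab hbc)
end

section
/- Let I₁, J₁, I₂, J₂, … be nonempty finite intervals in ℤ with min J_k = max I_k + 1 and min I_{k+1} = max J_k + 1 for all k ≥ 1, such that the sequences (#I_k) and (#J_k) are strictly increasing. Then W = ⋃_{k≥1} I_k admits no minimal asymptotic complement in ℤ. -/
open Pointwise

theorem stmt_16 (p q r s : ℕ → ℤ)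
    (hI : ∀ k, 1 ≤ k → p k ≤ q k)
    (hJ : ∀ k, 1 ≤ k → r k ≤ s k)
    (hadj1 : ∀ k, 1 ≤ k → r k = q k + 1)
    (hadj2 : ∀ k, 1 ≤ k → p (k + 1) = s k + 1)
    (hmonoI : ∀ k, 1 ≤ k → q k - p k < q (k + 1) - p (k + 1))
    (hmonoJ : ∀ k, 1 ≤ k → s k - r k < s (k + 1) - r (k + 1))
    (W : Set ℤ) (hW : W = ⋃ k ∈ {k : ℕ | 1 ≤ k}, Set.Icc (p k) (q k)) :
    ¬ ∃ C : Set ℤ, IsAddMinAsympCompl W C := by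
  rintro ⟨C, ⟨⟨hCne, hfin⟩, hmin⟩⟩
  have hWmem : ∀ x : ℤ, x ∈ W ↔ ∃ k, 1 ≤ k ∧ p k ≤ x ∧ x ≤ q k := by
    intro x
    simp only [hW, Set.mem_iUnion, Set.mem_Icc, Set.mem_setOf_eq, exists_prop]
  have hqp : ∀ k, 1 ≤ k → q k + 2 ≤ p (k + 1) := by
    intro k hk
    have h1 := hadj1 k hk
    have h2 := hadj2 k hk
    have h3 := hJ k hk
    omega
  have hpmono : ∀ k m, 1 ≤ k → k ≤ m → p k ≤ p m := by
    intro k m hk hkm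
    induction m, hkm using Nat.le_induction with
    | base => exact le_rfl
    | succ n hn ih =>
      have h1 : 1 ≤ n := le_trans hk hn
      have h2 := hqp n h1
      have h3 := hI n h1
      omega
  have hqmono : ∀ k m, 1 ≤ k → k ≤ m → q k ≤ q m := by
    intro k m hk hkm
    induction m, hkm using Nat.le_induction with
    | base => exact le_rfl
    | succ n hn ih =>
      have h1 : 1 ≤ n := le_trans hk hn
      have h2 := hqp n h1
      have h3 := hI (n + 1) (by omega)
      omega
  have hlen : ∀ k : ℕ, 1 ≤ k → (k : ℤ) ≤ q k - p k + 1 := by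
    intro k hk
    induction k, hk using Nat.le_induction with
    | base =>
      have := hI 1 le_rfl
      push_cast
      omega
    | succ n hn ih =>
      have := hmonoI n hn
      push_cast
      push_cast at ih
      omega
  have hlow : ∀ x ∈ W, p 1 ≤ x := by
    intro x hx
    obtain ⟨k, hk, h1, h2⟩ := (hWmem x).1 hx
    exact le_trans (hpmono 1 k le_rfl hk) h1
  have hbelow : ∀ B : ℤ, ∃ c ∈ C, c < B := by
    intro B
    have hinf : (Set.Iio (B + p 1)).Infinite := Set.Iio_infinite _
    obtain ⟨x, hx⟩ := (hinf.diff hfin).nonempty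
    have hxW : x ∈ W + C := by
      by_contra h
      exact hx.2 ⟨trivial, h⟩
    obtain ⟨w, hw, cc, hcc, hwc⟩ := Set.mem_add.1 hxW
    refine ⟨cc, hcc, ?_⟩
    have h1 := hlow w hw
    have h2 : x < B + p 1 := hx.1
    omega
  obtain ⟨f, hf⟩ := hCne
  obtain ⟨c, hc, hcf⟩ := hbelow f
  obtain ⟨e, he, hec⟩ := hbelow c
  have hfCc : f ∈ C \ {c} := ⟨hf, by simp; omega⟩
  have heCc : e ∈ C \ {c} := ⟨he, by simp; omega⟩
  apply hmin c hc
  constructor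
  · exact ⟨f, hfCc⟩
  · set δ : ℤ := c - e with hδ
    set δ' : ℤ := f - c with hδ'
    set K : ℕ := (δ + δ').toNat with hKdef
    have hK1 : 1 ≤ K := by omega
    have hsub : (Set.univ : Set ℤ) \ (W + (C \ {c})) ⊆
        ((Set.univ : Set ℤ) \ (W + C)) ∪ Set.Icc (c + p 1) (c + q K) := by
      rintro x ⟨-, hx⟩
      by_cases hxC : x ∈ W + C
      · right
        obtain ⟨w, hw, cc, hcc, hwc⟩ := Set.mem_add.1 hxC
        have hcceq : cc = c := by
          by_contra hne
          exact hx (Set.mem_add.2 ⟨w, hw, cc, ⟨hcc, by simpa using hne⟩, hwc⟩)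
        subst hcceq
        obtain ⟨k, hk1, hpk, hqk⟩ := (hWmem w).1 hw
        have hkK : k < K := by
          by_contra hkge
          push_neg at hkge
          -- x - e = w + δ must not be in W
          have h1 : w + δ ∉ W := by
            intro hmem
            exact hx (Set.mem_add.2 ⟨w + δ, hmem, e, heCc, by omega⟩)
          -- x - f = w - δ' must not be in W
          have h2 : w - δ' ∉ W := by
            intro hmem
            exact hx (Set.mem_add.2 ⟨w - δ', hmem, f, hfCc, by omega⟩)
          have h3 : ¬ (p k ≤ w + δ ∧ w + δ ≤ q k) := by
            intro hh
            exact h1 ((hWmem _).2 ⟨k, hk1, hh.1, hh.2⟩)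
          have h4 : ¬ (p k ≤ w - δ' ∧ w - δ' ≤ q k) := by
            intro hh
            exact h2 ((hWmem _).2 ⟨k, hk1, hh.1, hh.2⟩)
          have h5 := hlen k hk1
          have h6 : (K : ℤ) ≤ (k : ℤ) := by exact_mod_cast hkge
          omega
        have hwq : w ≤ q K := le_trans hqk (hqmono k K hk1 (le_of_lt hkK))
        have hwp : p 1 ≤ w := hlow w hw
        constructor <;> omega
      · exact Or.inl ⟨trivial, hxC⟩
    exact Set.Finite.subset (hfin.union (Set.finite_Icc _ _)) hsub
end

section
/- Let I₁, J₁, I₂, J₂, … be nonempty finite intervals in ℤ with min J_k = max I_k + 1 and min I_{k+1} = max J_k + 1 for all k ≥ 1, such that the sequences (#I_k) and (#J_k) are strictly increasing. Then for any integers a, n with n ≠ 0, the set W = {x ∈ ℤ : x < min I₁, x ≡ a mod n} ∪ ⋃_{k≥1} I_k admits no minimal asymptotic complement in ℤ. -/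
open Pointwise

open Set

/-!
If `C` is a minimal asymptotic complement of `W`, every `c ∈ C` covers infinitely many integers
`x` that no other element of `C` covers, and each of them has `x - c ∈ W`. If these `x` are
unbounded below, then `x - c` eventually lies in the arithmetic progression, which forces `c` to
be the only element of `C` in its residue class mod `n`. If they are unbounded above, then `x - c`
lies in ever longer intervals `I_k`, and an interval longer than `c₂ - c₁` containing `x - c` but
neither `x - c₁` nor `x - c₂` is impossible for `c₁ < c < c₂`; so `c` is the least or the greatest
element of `C`. Hence `C` is finite. But the gaps `J_k` have unbounded length, and a finite set
cannot fill them.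
-/

def uniquelyCovered (W C : Set ℤ) (c : ℤ) : Set ℤ := (W + C) \ (W + (C \ {c}))

def HasLongGaps (W : Set ℤ) : Prop := ∀ D M : ℤ, ∃ x, M ≤ x ∧ Disjoint (Icc x (x + D)) W

def HasLongBlocks (W : Set ℤ) : Prop :=
  ∀ D : ℤ, ∃ M, ∀ x ∈ W, M ≤ x → ∃ u v, x ∈ Icc u v ∧ D ≤ v - u ∧ Icc u v ⊆ W

section Complement

variable {W C : Set ℤ} {c x : ℤ}

lemma sub_mem_of_mem_uniquelyCovered (hx : x ∈ uniquelyCovered W C c) : x - c ∈ W := by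
  obtain ⟨⟨w, hw, c', hc', rfl⟩, hx'⟩ := hx
  by_cases hcc : c' = c
  · subst hcc
    simpa using hw
  · exact absurd (add_mem_add hw (mem_sdiff_of_mem hc' hcc)) hx'

lemma sub_notMem_of_mem_uniquelyCovered (hx : x ∈ uniquelyCovered W C c) {c' : ℤ} (hc' : c' ∈ C)
    (hne : c' ≠ c) : x - c' ∉ W := fun hw =>
  hx.2 (mem_add.mpr ⟨x - c', hw, c', mem_sdiff_of_mem hc' hne, sub_add_cancel x c'⟩)

lemma IsAddMinAsympCompl.infinite_uniquelyCovered (hC : IsAddMinAsympCompl W C)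
    (hinf : C.Infinite) (hc : c ∈ C) : (uniquelyCovered W C c).Infinite := by
  have hnot : (univ \ (W + (C \ {c}))).Infinite := fun hfin =>
    hC.2 c hc ⟨(hinf.sdiff (finite_singleton c)).nonempty, hfin⟩
  refine (hnot.sdiff hC.1.2).mono ?_
  rintro x ⟨⟨-, hx⟩, hxC⟩
  refine ⟨?_, hx⟩
  by_contra hxWC
  exact hxC ⟨trivial, hxWC⟩

-- If `C ⊆ [l, u]` and `[x, x + (u - l)]` misses `W`, then `x + u ∉ W + C`.
lemma HasLongGaps.not_bddAbove_compl_add (hW : HasLongGaps W) (hC : C.Finite) :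
    ¬ BddAbove (univ \ (W + C)) := by
  rintro ⟨M, hM⟩
  obtain ⟨l, u, hlu⟩ := bddBelow_bddAbove_iff_subset_Icc.mp ⟨hC.bddBelow, hC.bddAbove⟩
  obtain ⟨x, hMx, hgap⟩ := hW (u - l) (M - u + 1)
  have hxu : x + u ∈ univ \ (W + C) := by
    refine ⟨trivial, ?_⟩
    intro hmem
    obtain ⟨w, hw, c, hc, hwc⟩ := mem_add.mp hmem
    obtain ⟨hlc, hcu⟩ := hlu hc
    exact disjoint_left.mp hgap ⟨by omega, by omega⟩ hw
  linarith [hM hxu]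

lemma IsAddAsympCompl.infinite_of_hasLongGaps (hC : IsAddAsympCompl W C) (hW : HasLongGaps W) :
    C.Infinite := fun hfin => hW.not_bddAbove_compl_add hfin hC.2.bddAbove

lemma eq_of_modEq_of_not_bddBelow_uniquelyCovered {a b n : ℤ}
    (hleft : ∀ x < b, x ∈ W ↔ x ≡ a [ZMOD n]) (hU : ¬ BddBelow (uniquelyCovered W C c))
    {c' : ℤ} (hc' : c' ∈ C) (hmod : c' ≡ c [ZMOD n]) : c' = c := by
  by_contra hne
  obtain ⟨x, hx, hxb⟩ := not_bddBelow_iff.mp hU (min (b + c) (b + c'))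
  have hxc : x - c ≡ a [ZMOD n] := (hleft _ (by omega)).mp (sub_mem_of_mem_uniquelyCovered hx)
  exact sub_notMem_of_mem_uniquelyCovered hx hc' hne
    ((hleft _ (by omega)).mpr ((Int.ModEq.sub_left x hmod).trans hxc))

lemma HasLongBlocks.isLeast_or_isGreatest (hW : HasLongBlocks W)
    (hU : ¬ BddAbove (uniquelyCovered W C c)) (hc : c ∈ C) : IsLeast C c ∨ IsGreatest C c := by
  by_contra h
  simp only [IsLeast, IsGreatest, mem_lowerBounds, mem_upperBounds, hc, true_and, not_or,
    not_forall, not_le, exists_prop] at h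
  obtain ⟨⟨c₁, hc₁, hc₁c⟩, ⟨c₂, hc₂, hcc₂⟩⟩ := h
  obtain ⟨M, hM⟩ := hW (c₂ - c₁)
  obtain ⟨x, hx, hMx⟩ := not_bddAbove_iff.mp hU (M + c)
  obtain ⟨u, v, ⟨hux, hxv⟩, hlen, huv⟩ :=
    hM (x - c) (sub_mem_of_mem_uniquelyCovered hx) (by omega)
  have h₂ : ¬ u ≤ x - c₂ := fun h =>
    sub_notMem_of_mem_uniquelyCovered hx hc₂ hcc₂.ne' (huv ⟨h, by omega⟩)
  have h₁ : ¬ x - c₁ ≤ v := fun h =>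
    sub_notMem_of_mem_uniquelyCovered hx hc₁ hc₁c.ne (huv ⟨by omega, h⟩)
  omega

theorem not_isAddMinAsympCompl {a b n : ℤ} (hn : n ≠ 0)
    (hleft : ∀ x < b, x ∈ W ↔ x ≡ a [ZMOD n]) (hblocks : HasLongBlocks W) (hgaps : HasLongGaps W) :
    ¬ IsAddMinAsympCompl W C := by
  intro hC
  have hinf : C.Infinite := hC.1.infinite_of_hasLongGaps hgaps
  -- `c₁ ≡ c₂ [ZMOD n]` unfolds to `c₁ % n = c₂ % n`, so these `c` inject into `[0, |n|)`.
  have hbelow : {c ∈ C | ¬ BddBelow (uniquelyCovered W C c)}.Finite :=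
    (finite_Ico 0 |n|).of_injOn (f := fun c => c % n)
      (fun c _ => mem_Ico.mpr ⟨Int.emod_nonneg c hn, Int.emod_lt_abs c hn⟩)
      fun c₁ h₁ c₂ h₂ h => eq_of_modEq_of_not_bddBelow_uniquelyCovered hleft h₂.2 h₁.1 h
  have hleast : {c | IsLeast C c}.Subsingleton := fun _ h₁ _ h₂ => h₁.unique h₂
  have hgreatest : {c | IsGreatest C c}.Subsingleton := fun _ h₁ _ h₂ => h₁.unique h₂
  have habove : {c ∈ C | ¬ BddAbove (uniquelyCovered W C c)}.Finite :=
    (hleast.finite.union hgreatest.finite).subset fun c ⟨hc, hU⟩ =>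
      hblocks.isLeast_or_isGreatest hU hc
  refine hinf ((hbelow.union habove).subset fun c hc => ?_)
  by_cases hb : BddBelow (uniquelyCovered W C c)
  · exact Or.inr ⟨hc, fun ha => hC.infinite_uniquelyCovered hinf hc (hb.finite_of_bddAbove ha)⟩
  · exact Or.inl ⟨hc, hb⟩

end Complement

lemma add_sub_le_of_lt_succ {f : ℕ → ℤ} {a : ℕ} (hf : ∀ k, a ≤ k → f k < f (k + 1)) {j k : ℕ}
    (haj : a ≤ j) (hjk : j ≤ k) : f j + ((k : ℤ) - j) ≤ f k := by
  induction k, hjk using Nat.le_induction with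
  | base => simp
  | succ k hjk ih =>
    have := hf k (haj.trans hjk)
    push_cast
    omega

-- `I_k = [p k, q k]` and `J_k = [r k, s k]`.
structure IntervalChain (p q r s : ℕ → ℤ) : Prop where
  p_le_q : ∀ k, 1 ≤ k → p k ≤ q k
  r_le_s : ∀ k, 1 ≤ k → r k ≤ s k
  r_eq : ∀ k, 1 ≤ k → r k = q k + 1
  p_succ_eq : ∀ k, 1 ≤ k → p (k + 1) = s k + 1
  lengthI_lt : ∀ k, 1 ≤ k → q k - p k < q (k + 1) - p (k + 1)
  lengthJ_lt : ∀ k, 1 ≤ k → s k - r k < s (k + 1) - r (k + 1)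

def chainSet (p q : ℕ → ℤ) (a n : ℤ) : Set ℤ :=
  {x : ℤ | x < p 1 ∧ x ≡ a [ZMOD n]} ∪ ⋃ k ∈ {k : ℕ | 1 ≤ k}, Icc (p k) (q k)

lemma mem_chainSet {p q : ℕ → ℤ} {a n x : ℤ} :
    x ∈ chainSet p q a n ↔ (x < p 1 ∧ x ≡ a [ZMOD n]) ∨ ∃ k, 1 ≤ k ∧ x ∈ Icc (p k) (q k) := by
  simp only [chainSet, mem_union, mem_ofPred_eq, mem_iUnion, exists_prop]

namespace IntervalChain

variable {p q r s : ℕ → ℤ} (h : IntervalChain p q r s) {a n : ℤ} {j k : ℕ}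
include h

lemma q_add_two_le (hk : 1 ≤ k) : q k + 2 ≤ p (k + 1) := by
  have := h.r_le_s k hk
  have := h.r_eq k hk
  have := h.p_succ_eq k hk
  omega

lemma p_le (hj : 1 ≤ j) (hjk : j ≤ k) : p j ≤ p k := by
  have := add_sub_le_of_lt_succ
    (fun k hk => (h.p_le_q k hk).trans_lt (by linarith [h.q_add_two_le hk])) hj hjk
  omega

lemma q_add_sub_le (hj : 1 ≤ j) (hjk : j ≤ k) : q j + ((k : ℤ) - j) ≤ q k :=
  add_sub_le_of_lt_succ
    (fun k hk => by linarith [h.q_add_two_le hk, h.p_le_q (k + 1) (by omega)]) hj hjk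

lemma sub_one_le_lengthI (hk : 1 ≤ k) : (k : ℤ) - 1 ≤ q k - p k := by
  have := add_sub_le_of_lt_succ (f := fun k => q k - p k) h.lengthI_lt le_rfl hk
  have := h.p_le_q 1 le_rfl
  simp only [Nat.cast_one] at *
  omega

lemma sub_one_le_lengthJ (hk : 1 ≤ k) : (k : ℤ) - 1 ≤ s k - r k := by
  have := add_sub_le_of_lt_succ (f := fun k => s k - r k) h.lengthJ_lt le_rfl hk
  have := h.r_le_s 1 le_rfl
  simp only [Nat.cast_one] at *
  omega

lemma mem_chainSet_iff_of_lt {x : ℤ} (hx : x < p 1) : x ∈ chainSet p q a n ↔ x ≡ a [ZMOD n] := by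
  rw [mem_chainSet]
  constructor
  · rintro (⟨-, hmod⟩ | ⟨k, hk, hpk, -⟩)
    · exact hmod
    · linarith [h.p_le le_rfl hk]
  · exact fun hmod => Or.inl ⟨hx, hmod⟩

lemma notMem_chainSet_of_mem_Icc {y : ℤ} (hk : 1 ≤ k) (hy : y ∈ Icc (r k) (s k)) :
    y ∉ chainSet p q a n := by
  have hr := h.r_eq k hk
  have hp := h.p_succ_eq k hk
  rw [mem_chainSet]
  obtain ⟨hry, hys⟩ := hy
  rintro (⟨hy1, -⟩ | ⟨j, hj, hpj, hqj⟩)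
  · have := h.p_le_q 1 le_rfl
    have := h.q_add_sub_le le_rfl hk
    omega
  · rcases le_or_gt j k with hjk | hkj
    · have := h.q_add_sub_le hj hjk
      omega
    · have := h.p_le (by omega) (show k + 1 ≤ j from hkj)
      omega

lemma hasLongBlocks : HasLongBlocks (chainSet p q a n) := by
  intro D
  refine ⟨q (D.toNat + 1) + 1, fun x hx hMx => ?_⟩
  rcases mem_chainSet.mp hx with ⟨hx1, -⟩ | ⟨k, hk, hxk⟩
  · have := h.q_add_sub_le le_rfl (show 1 ≤ D.toNat + 1 by omega)
    have := h.p_le_q 1 le_rfl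
    omega
  · refine ⟨p k, q k, hxk, ?_, fun y hy => mem_chainSet.mpr (Or.inr ⟨k, hk, hy⟩)⟩
    have hKk : D.toNat + 1 < k := by
      by_contra! hkK
      have := h.q_add_sub_le hk hkK
      have := hxk.2
      omega
    have := h.sub_one_le_lengthI hk
    omega

lemma hasLongGaps : HasLongGaps (chainSet p q a n) := by
  intro D M
  set K := D.toNat + (M - q 1).toNat + 1
  have hK : 1 ≤ K := by omega
  have hlen := h.sub_one_le_lengthJ hK
  have hq := h.q_add_sub_le le_rfl hK
  have hr := h.r_eq K hK
  refine ⟨r K, by omega, disjoint_left.mpr fun y hy =>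
    h.notMem_chainSet_of_mem_Icc hK ⟨hy.1, by have := hy.2; omega⟩⟩

end IntervalChain

theorem stmt_17 (p q r s : ℕ → ℤ)
    (hI : ∀ k, 1 ≤ k → p k ≤ q k)
    (hJ : ∀ k, 1 ≤ k → r k ≤ s k)
    (hadj1 : ∀ k, 1 ≤ k → r k = q k + 1)
    (hadj2 : ∀ k, 1 ≤ k → p (k + 1) = s k + 1)
    (hmonoI : ∀ k, 1 ≤ k → q k - p k < q (k + 1) - p (k + 1))
    (hmonoJ : ∀ k, 1 ≤ k → s k - r k < s (k + 1) - r (k + 1))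
    (a n : ℤ) (hn : n ≠ 0)
    (W : Set ℤ)
    (hW : W = {x : ℤ | x < p 1 ∧ x ≡ a [ZMOD n]} ∪
      ⋃ k ∈ {k : ℕ | 1 ≤ k}, Set.Icc (p k) (q k)) :
    ¬ ∃ C : Set ℤ, IsAddMinAsympCompl W C := by
  rintro ⟨C, hC⟩
  subst hW
  have h : IntervalChain p q r s := ⟨hI, hJ, hadj1, hadj2, hmonoI, hmonoJ⟩
  exact not_isAddMinAsympCompl hn (fun x hx => h.mem_chainSet_iff_of_lt hx) h.hasLongBlocks
    h.hasLongGaps hC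
end

section
/- Let W be a bounded below infinite subset of ℤ such that, writing ℤ_{≥1} \ W = {v₁ < v₂ < v₃ < …}, one has v_{i+1} - v_i → ∞ as i → ∞. Then W admits no minimal asymptotic complement in ℤ. -/
open Pointwise Filter

/-!
Let `C` be a minimal asymptotic complement of `W`. Since `W` is bounded below and `W + C` is
cofinite, `C` is infinite, so besides any `c ∈ C` it contains two further elements `c' < c''`.
An integer `n > c''` covered by `W + C` but not by `W + (C \ {c})` has `n - c'` and `n - c''`
outside `W` and positive, i.e. both are terms of `v` at distance `c'' - c'`. As the gaps of `v`
tend to infinity, this happens for only finitely many `n`, so `C \ {c}` is still an asymptotic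
complement, contradicting minimality.
-/

open Set

theorem StrictMono.finite_setOf_mem_range_and_add_mem_range {α : Type*} [AddCommGroup α]
    [LinearOrder α] [IsOrderedAddMonoid α] {v : ℕ → α} (hv : StrictMono v)
    (hgap : Tendsto (fun i => v (i + 1) - v i) atTop atTop) {d : α} (hd : 0 < d) :
    {x | x ∈ range v ∧ x + d ∈ range v}.Finite := by
  have : Nontrivial α := ⟨⟨0, d, hd.ne⟩⟩
  obtain ⟨N, hN⟩ := eventually_atTop.mp (hgap.eventually (eventually_gt_atTop d))
  refine ((finite_Iio N).image v).subset ?_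
  rintro _ ⟨⟨j, rfl⟩, i, hi⟩
  have hji : j < i := hv.lt_iff_lt.mp (by rw [hi]; exact lt_add_of_pos_right _ hd)
  have hsucc : v (j + 1) ≤ v i := hv.monotone hji
  refine ⟨j, mem_Iio.mpr (lt_of_not_ge fun hj => ?_), rfl⟩
  rw [hi] at hsucc
  exact hsucc.not_gt (lt_sub_iff_add_lt'.mp (hN j hj))

theorem IsAddAsympCompl.infinite {W C : Set ℤ} (hC : IsAddAsympCompl W C) (hW : BddBelow W) :
    C.Infinite := by
  intro hfin
  obtain ⟨m, hm⟩ := hW.add hfin.bddBelow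
  refine Iio_infinite m (hC.2.subset fun x hx => ⟨trivial, fun hxWC => ?_⟩)
  exact (not_le.mpr hx) (hm hxWC)

theorem mem_range_of_notMem_add {W C : Set ℤ} {v : ℕ → ℤ}
    (hvr : range v = {n : ℤ | 1 ≤ n} \ W) {n c : ℤ} (hn : n ∉ W + C) (hc : c ∈ C)
    (hcn : c < n) : n - c ∈ range v := by
  rw [hvr]
  exact ⟨show 1 ≤ n - c by omega, fun hW => hn ⟨n - c, hW, c, hc, by ring⟩⟩

theorem IsAddAsympCompl.diff_singleton_s18 {W C : Set ℤ} (hC : IsAddAsympCompl W C)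
    (hW : BddBelow W) {v : ℕ → ℤ} (hv : StrictMono v) (hvr : range v = {n : ℤ | 1 ≤ n} \ W)
    (hgap : Tendsto (fun i => v (i + 1) - v i) atTop atTop) {c c' c'' : ℤ}
    (hc' : c' ∈ C \ {c}) (hc'' : c'' ∈ C \ {c}) (hlt : c' < c'') :
    IsAddAsympCompl W (C \ {c}) := by
  obtain ⟨b, hb⟩ := hW
  refine ⟨⟨c', hc'⟩, ?_⟩
  have hpairs := hv.finite_setOf_mem_range_and_add_mem_range hgap (sub_pos.mpr hlt)
  refine ((hC.2.union (finite_Icc (b + c) c'')).union (hpairs.image (· + c''))).subset ?_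
  rintro n ⟨-, hn⟩
  by_cases hWC : n ∈ W + C
  · obtain ⟨w, hw, c₀, hc₀, rfl⟩ := mem_add.mp hWC
    obtain rfl : c₀ = c := by
      by_contra hne
      exact hn ⟨w, hw, c₀, ⟨hc₀, hne⟩, rfl⟩
    by_cases hsmall : w + c₀ ≤ c''
    · exact Or.inl (Or.inr ⟨add_le_add_left (hb hw) c₀, hsmall⟩)
    · have h' := mem_range_of_notMem_add hvr hn hc' (by omega)
      have h'' := mem_range_of_notMem_add hvr hn hc'' (by omega)
      refine Or.inr ⟨w + c₀ - c'', ⟨h'', ?_⟩, by ring⟩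
      rwa [show w + c₀ - c'' + (c'' - c') = w + c₀ - c' by ring]
  · exact Or.inl (Or.inl ⟨trivial, hWC⟩)

theorem stmt_18_general (W : Set ℤ) (hWbdd : BddBelow W)
    (v : ℕ → ℤ) (hv : StrictMono v)
    (hvr : Set.range v = {n : ℤ | 1 ≤ n} \ W)
    (hgap : Tendsto (fun i => v (i + 1) - v i) atTop atTop) :
    ¬ ∃ C : Set ℤ, IsAddMinAsympCompl W C := by
  rintro ⟨C, hC, hmin⟩
  obtain ⟨c, hc⟩ := hC.1
  obtain ⟨c', hc', c'', hc'', hlt⟩ :=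
    ((hC.infinite hWbdd).sdiff (finite_singleton c)).nontrivial.exists_lt
  exact hmin c hc (hC.diff_singleton_s18 hWbdd hv hvr hgap hc' hc'' hlt)

theorem stmt_18 (W : Set ℤ) (hWbdd : BddBelow W) (hWinf : W.Infinite)
    (v : ℕ → ℤ) (hv : StrictMono v)
    (hvr : Set.range v = {n : ℤ | 1 ≤ n} \ W)
    (hgap : Tendsto (fun i => v (i + 1) - v i) atTop atTop) :
    ¬ ∃ C : Set ℤ, IsAddMinAsympCompl W C :=
  stmt_18_general W hWbdd v hv hvr hgap
end
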